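/- arXiv:math/0112138 — 8 statements merged into one kernel-verified Lean document; each statement's English description precedes it below -/
import Mathlib

section
/- In the algebra of GL_{p,q}(1|1), assuming d is invertible, the superdeterminant sD = a d⁻¹ - β d⁻¹ γ d⁻¹ commutes with a, d, β, and γ (hence with d⁻¹ as well). -/
section
variable {K : Type*} [Field K] {R : Type*} [Ring R] [Algebra K R]

private lemma swap_ext {X Y : R} {s : K} (h : X * Y = s • (Y * X)) (x : R) :
    X * (Y * x) = s • (Y * (X * x)) := by
  rw [← mul_assoc, h, smul_mul_assoc, mul_assoc]

private lemma swap_ext' {X Y : R} {s : K} (h : X * Y = -(s • (Y * X))) (x : R) :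
    X * (Y * x) = -(s • (Y * (X * x))) := by
  rw [← mul_assoc, h, neg_mul, smul_mul_assoc, mul_assoc]

private lemma zero_ext {X Y : R} (h : X * Y = 0) (x : R) : X * (Y * x) = 0 := by
  rw [← mul_assoc, h, zero_mul]

private lemma one_ext {X Y : R} (h : X * Y = 1) (x : R) : X * (Y * x) = x := by
  rw [← mul_assoc, h, one_mul]

end

/-- If d is invertible, the superdeterminant sD = a d⁻¹ - β d⁻¹ γ d⁻¹ commutes
with a, d, β and γ. -/
theorem gl_pq_sdet_central
{K : Type*} [Field K] {R : Type*} [Ring R] [Algebra K R]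
    (p q : K) (hp : p ≠ 0) (hq : q ≠ 0)
    (a β γ d : R)
    (hab : a * β = q • (β * a)) (hdb : d * β = q • (β * d))
    (hag : a * γ = p • (γ * a)) (hdg : d * γ = p • (γ * d))
    (hbg : β * γ = -((p * q⁻¹) • (γ * β)))
    (hb2 : β ^ 2 = 0) (hg2 : γ ^ 2 = 0)
    (had : a * d - d * a = (p - q⁻¹) • (γ * β))
    (d' : R) (hd1 : d * d' = 1) (hd2 : d' * d = 1) :
    (a * d' - β * d' * γ * d') * a = a * (a * d' - β * d' * γ * d') ∧
    (a * d' - β * d' * γ * d') * d = d * (a * d' - β * d' * γ * d') ∧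
    (a * d' - β * d' * γ * d') * β = β * (a * d' - β * d' * γ * d') ∧
    (a * d' - β * d' * γ * d') * γ = γ * (a * d' - β * d' * γ * d') := by
  have hbb : β * β = 0 := by simpa [pow_two] using hb2
  have hgg : γ * γ = 0 := by simpa [pow_two] using hg2
  -- d' commutation with β
  have h1 : d' * β = q⁻¹ • (β * d') := by
    have h := congrArg (fun x => d' * x * d') hdb
    simp only [smul_mul_assoc, mul_smul_comm] at h
    rw [show d' * (d * β) * d' = β * d' by rw [← mul_assoc, hd2, one_mul],
        show d' * (β * d) * d' = d' * β by rw [mul_assoc, mul_assoc, hd1, mul_one]] at h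
    rw [h, smul_smul, inv_mul_cancel₀ hq, one_smul]
  have h2 : d' * γ = p⁻¹ • (γ * d') := by
    have h := congrArg (fun x => d' * x * d') hdg
    simp only [smul_mul_assoc, mul_smul_comm] at h
    rw [show d' * (d * γ) * d' = γ * d' by rw [← mul_assoc, hd2, one_mul],
        show d' * (γ * d) * d' = d' * γ by rw [mul_assoc, mul_assoc, hd1, mul_one]] at h
    rw [h, smul_smul, inv_mul_cancel₀ hp, one_smul]
  -- d' commutation with a
  have h3a : d' * a - a * d' = (p - q⁻¹) • (d' * (γ * β) * d') := by
    have h := congrArg (fun x => d' * x * d') had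
    simp only [mul_sub, sub_mul, smul_mul_assoc, mul_smul_comm] at h
    rw [show d' * (a * d) * d' = d' * a by rw [mul_assoc, mul_assoc, hd1, mul_one],
        show d' * (d * a) * d' = a * d' by rw [← mul_assoc, hd2, one_mul]] at h
    exact h
  have h3 : d' * a = a * d' + ((p - q⁻¹) * (p⁻¹ * q⁻¹)) • (γ * (β * (d' * d'))) := by
    have h := sub_eq_iff_eq_add.mp h3a
    rw [h]
    rw [show d' * (γ * β) * d' = d' * (γ * (β * d')) by rw [mul_assoc, mul_assoc],
        swap_ext h2, swap_ext h1, smul_comm]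
    simp only [mul_smul_comm, smul_smul]
    module
  -- extended (right-associated) versions
  have hd1e := one_ext hd1
  have hd2e := one_ext hd2
  have habe := swap_ext hab
  have hdbe := swap_ext hdb
  have hage := swap_ext hag
  have hdge := swap_ext hdg
  have hbge := swap_ext' hbg
  have hbbe := zero_ext hbb
  have hgge := zero_ext hgg
  have h1e := swap_ext h1
  have h2e := swap_ext h2
  have hda : d * a = a * d - (p - q⁻¹) • (γ * β) := by rw [← had]; abel
  have hdae : ∀ x : R, d * (a * x) = a * (d * x) - (p - q⁻¹) • (γ * (β * x)) := by
    intro x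
    rw [← mul_assoc, hda, sub_mul, smul_mul_assoc, mul_assoc, mul_assoc]
  have h3e : ∀ x : R, d' * (a * x)
      = a * (d' * x) + ((p - q⁻¹) * (p⁻¹ * q⁻¹)) • (γ * (β * (d' * (d' * x)))) := by
    intro x
    rw [← mul_assoc, h3, add_mul, smul_mul_assoc, mul_assoc, mul_assoc, mul_assoc, mul_assoc]
  refine ⟨?_, ?_, ?_, ?_⟩ <;>
  · simp only [mul_assoc, sub_mul, mul_sub, smul_mul_assoc, mul_smul_comm, smul_smul,
      smul_sub, smul_add, mul_add, add_mul, smul_neg, neg_smul, mul_neg, neg_mul, neg_neg, mul_one, one_mul,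
      hd1e, hd2e, hd1, hd2, habe, hdbe, hage, hdge, hbge, hbbe, hgge, h1e, h2e, h3e,
      hab, hdb, hag, hdg, hbg, hbb, hgg, h1, h2, h3, hda, hdae,
      zero_mul, mul_zero, smul_zero, zero_smul, sub_zero, zero_sub, add_zero, zero_add]
    match_scalars <;> field_simp <;> ring
end

section
/- If T = (a, β; γ, d) is a matrix over the GL_{p,q}(1|1) algebra with a, d invertible, and Δ₁ = ad - p⁻¹βγ, Δ₂ = da - q⁻¹γβ are invertible, then the matrix S = (dΔ₁⁻¹, -q⁻¹βΔ₂⁻¹; -p⁻¹γΔ₁⁻¹, aΔ₂⁻¹) satisfies T·S = I = S·T, i.e., S is a two-sided inverse of T. -/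
/-!
T has a right adjugate A = (d, -q⁻¹β; -p⁻¹γ, a) and a left adjugate A' = (d, -qβ; -pγ, a) with
T A = A' T = diag(Δ₁, Δ₂). Hence S = A diag(Δ₁⁻¹, Δ₂⁻¹) is a right inverse and diag(Δ₁⁻¹, Δ₂⁻¹) A'
a left inverse of T, so the two coincide and S is a two-sided inverse.
-/

namespace GLpq

variable {K : Type*} [Field K] {R : Type*} [Ring R] [Algebra K R] {p q : K} {a β γ d : R}

theorem mul_rightAdjugate (hp : p ≠ 0) (hq : q ≠ 0)
    (hab : a * β = q • (β * a)) (hdg : d * γ = p • (γ * d)) :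
    !![a, β; γ, d] * !![d, -(q⁻¹ • β); -(p⁻¹ • γ), a] =
      !![a * d - p⁻¹ • (β * γ), 0; 0, d * a - q⁻¹ • (γ * β)] := by
  have h12 : a * -(q⁻¹ • β) + β * a = 0 := by
    rw [mul_neg, mul_smul_comm, hab, smul_smul, inv_mul_cancel₀ hq, one_smul, neg_add_cancel]
  have h21 : γ * d + d * -(p⁻¹ • γ) = 0 := by
    rw [mul_neg, mul_smul_comm, hdg, smul_smul, inv_mul_cancel₀ hp, one_smul, add_neg_cancel]
  rw [Matrix.mul_fin_two, h12, h21, mul_neg, mul_smul_comm, mul_neg, mul_smul_comm,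
    ← sub_eq_add_neg, neg_add_eq_sub]

theorem leftAdjugate_mul (hp : p ≠ 0) (hq : q ≠ 0)
    (hdb : d * β = q • (β * d)) (hag : a * γ = p • (γ * a))
    (hbg : β * γ = -((p * q⁻¹) • (γ * β)))
    (had : a * d - d * a = (p - q⁻¹) • (γ * β)) :
    !![d, -(q • β); -(p • γ), a] * !![a, β; γ, d] =
      !![a * d - p⁻¹ • (β * γ), 0; 0, d * a - q⁻¹ • (γ * β)] := by
  have hda : d * a = a * d - (p - q⁻¹) • (γ * β) := by rw [← had, sub_sub_cancel]
  have h11 : d * a + -(q • β) * γ = a * d - p⁻¹ • (β * γ) := by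
    rw [neg_mul, smul_mul_assoc, hbg, hda]
    match_scalars
    · ring
    · field_simp
      ring
  have h12 : d * β + -(q • β) * d = 0 := by rw [hdb, neg_mul, smul_mul_assoc, add_neg_cancel]
  have h21 : -(p • γ) * a + a * γ = 0 := by rw [hag, neg_mul, smul_mul_assoc, neg_add_cancel]
  have h22 : -(p • γ) * β + a * d = d * a - q⁻¹ • (γ * β) := by
    rw [neg_mul, smul_mul_assoc, hda]
    module
  rw [Matrix.mul_fin_two, h11, h12, h21, h22]

end GLpq

theorem gl_pq_inverse_matrix_general
{K : Type*} [Field K] {R : Type*} [Ring R] [Algebra K R]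
    (p q : K) (hp : p ≠ 0) (hq : q ≠ 0)
    (a β γ d : R)
    (hab : a * β = q • (β * a)) (hdb : d * β = q • (β * d))
    (hag : a * γ = p • (γ * a)) (hdg : d * γ = p • (γ * d))
    (hbg : β * γ = -((p * q⁻¹) • (γ * β)))
    (had : a * d - d * a = (p - q⁻¹) • (γ * β))
    (D1 D2 : R)
    (hD1 : (a * d - p⁻¹ • (β * γ)) * D1 = 1) (hD1' : D1 * (a * d - p⁻¹ • (β * γ)) = 1)
    (hD2 : (d * a - q⁻¹ • (γ * β)) * D2 = 1) (hD2' : D2 * (d * a - q⁻¹ • (γ * β)) = 1) :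
    (!![a, β; γ, d] : Matrix (Fin 2) (Fin 2) R) *
      !![d * D1, -(q⁻¹ • (β * D2)); -(p⁻¹ • (γ * D1)), a * D2] = 1 ∧
    (!![d * D1, -(q⁻¹ • (β * D2)); -(p⁻¹ • (γ * D1)), a * D2] : Matrix (Fin 2) (Fin 2) R) *
      !![a, β; γ, d] = 1 := by
  have hS : !![d * D1, -(q⁻¹ • (β * D2)); -(p⁻¹ • (γ * D1)), a * D2] =
      !![d, -(q⁻¹ • β); -(p⁻¹ • γ), a] * !![D1, 0; 0, D2] := by
    simp
  rw [hS]
  have h_right : !![a, β; γ, d] * (!![d, -(q⁻¹ • β); -(p⁻¹ • γ), a] * !![D1, 0; 0, D2]) = 1 := by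
    rw [← mul_assoc, GLpq.mul_rightAdjugate hp hq hab hdg, Matrix.mul_fin_two, hD1, hD2,
      Matrix.one_fin_two]
    simp
  have h_left : !![D1, 0; 0, D2] * !![d, -(q • β); -(p • γ), a] * !![a, β; γ, d] = 1 := by
    rw [mul_assoc, GLpq.leftAdjugate_mul hp hq hdb hag hbg had, Matrix.mul_fin_two, hD1', hD2',
      Matrix.one_fin_two]
    simp
  exact ⟨h_right, left_inv_eq_right_inv h_left h_right ▸ h_left⟩

/-- The matrix S = (dΔ₁⁻¹, -q⁻¹βΔ₂⁻¹; -p⁻¹γΔ₁⁻¹, aΔ₂⁻¹) is a two-sided inverse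
of T = (a, β; γ, d). -/
theorem gl_pq_inverse_matrix
{K : Type*} [Field K] {R : Type*} [Ring R] [Algebra K R]
    (p q : K) (hp : p ≠ 0) (hq : q ≠ 0)
    (a β γ d : R)
    (hab : a * β = q • (β * a)) (hdb : d * β = q • (β * d))
    (hag : a * γ = p • (γ * a)) (hdg : d * γ = p • (γ * d))
    (hbg : β * γ = -((p * q⁻¹) • (γ * β)))
    (hb2 : β ^ 2 = 0) (hg2 : γ ^ 2 = 0)
    (had : a * d - d * a = (p - q⁻¹) • (γ * β))
    (a' d' D1 D2 : R)
    (ha1 : a * a' = 1) (ha2 : a' * a = 1)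
    (hd1 : d * d' = 1) (hd2 : d' * d = 1)
    (hD1 : (a * d - p⁻¹ • (β * γ)) * D1 = 1) (hD1' : D1 * (a * d - p⁻¹ • (β * γ)) = 1)
    (hD2 : (d * a - q⁻¹ • (γ * β)) * D2 = 1) (hD2' : D2 * (d * a - q⁻¹ • (γ * β)) = 1) :
    (!![a, β; γ, d] : Matrix (Fin 2) (Fin 2) R) *
      !![d * D1, -(q⁻¹ • (β * D2)); -(p⁻¹ • (γ * D1)), a * D2] = 1 ∧
    (!![d * D1, -(q⁻¹ • (β * D2)); -(p⁻¹ • (γ * D1)), a * D2] : Matrix (Fin 2) (Fin 2) R) *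
      !![a, β; γ, d] = 1 :=
  gl_pq_inverse_matrix_general p q hp hq a β γ d hab hdb hag hdg hbg had D1 D2 hD1 hD1' hD2 hD2'
end

section
/- Lemma 2.1: For any natural number n ≥ 1, in the GL_{p,q}(1|1) algebra with d invertible, one has (a - β d⁻¹ γ)ⁿ = aⁿ - ((qⁿ - p⁻ⁿ)/(q - p⁻¹)) · β aⁿ⁻¹ d⁻¹ γ, where the fraction denotes the scalar Σ_{k=0}^{n-1} q^{n-1-k} p^{-k}. -/
/-- Lemma 2.1: (a - β d⁻¹ γ)ⁿ = aⁿ - ((qⁿ - p⁻ⁿ)/(q - p⁻¹)) β aⁿ⁻¹ d⁻¹ γ, where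
the fraction is the scalar Σ_{k=0}^{n-1} q^(n-1-k) p⁻ᵏ. -/
theorem gl_pq_lemma_2_1
{K : Type*} [Field K] {R : Type*} [Ring R] [Algebra K R]
    (p q : K) (hp : p ≠ 0) (hq : q ≠ 0)
    (a β γ d : R)
    (hab : a * β = q • (β * a)) (hdb : d * β = q • (β * d))
    (hag : a * γ = p • (γ * a)) (hdg : d * γ = p • (γ * d))
    (hbg : β * γ = -((p * q⁻¹) • (γ * β)))
    (hb2 : β ^ 2 = 0) (hg2 : γ ^ 2 = 0)
    (had : a * d - d * a = (p - q⁻¹) • (γ * β))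
    (d' : R) (hd1 : d * d' = 1) (hd2 : d' * d = 1)
    (n : ℕ) (hn : 1 ≤ n) :
    (a - β * d' * γ) ^ n =
      a ^ n - (∑ k ∈ Finset.range n, q ^ (n - 1 - k) * p⁻¹ ^ k) •
        (β * a ^ (n - 1) * d' * γ) := by
  have hbb : β * β = 0 := by have := hb2; rwa [pow_two] at this
  have hgg : γ * γ = 0 := by have := hg2; rwa [pow_two] at this
  have hga : γ * a = p⁻¹ • (a * γ) := by
    rw [hag, smul_smul, inv_mul_cancel₀ hp, one_smul]
  have hbd' : β * d' = q • (d' * β) := by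
    have h0 : β * d' = d' * (d * β) * d' := by
      rw [← mul_assoc, hd2, one_mul]
    rw [h0, hdb, mul_smul_comm, smul_mul_assoc, mul_assoc, mul_assoc, hd1, mul_one]
  have hd'b : d' * β = q⁻¹ • (β * d') := by
    rw [hbd', smul_smul, inv_mul_cancel₀ hq, one_smul]
  have hgd' : γ * d' = p • (d' * γ) := by
    have h0 : γ * d' = d' * (d * γ) * d' := by
      rw [← mul_assoc, hd2, one_mul]
    rw [h0, hdg, mul_smul_comm, smul_mul_assoc, mul_assoc, mul_assoc, hd1, mul_one]
  have hd'g : d' * γ = p⁻¹ • (γ * d') := by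
    rw [hgd', smul_smul, inv_mul_cancel₀ hp, one_smul]
  have hakb : ∀ k : ℕ, a ^ k * β = q ^ k • (β * a ^ k) := by
    intro k
    induction k with
    | zero => simp
    | succ k ih =>
      rw [pow_succ, mul_assoc, hab, mul_smul_comm, ← mul_assoc, ih, smul_mul_assoc,
        smul_smul, mul_assoc, ← pow_succ, ← pow_succ']
  have hakg : ∀ k : ℕ, a ^ k * γ = p ^ k • (γ * a ^ k) := by
    intro k
    induction k with
    | zero => simp
    | succ k ih =>
      rw [pow_succ, mul_assoc, hag, mul_smul_comm, ← mul_assoc, ih, smul_mul_assoc,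
        smul_smul, mul_assoc, ← pow_succ, ← pow_succ']
  have hbak : ∀ k : ℕ, β * a ^ k = (q ^ k)⁻¹ • (a ^ k * β) := by
    intro k
    rw [hakb k, smul_smul, inv_mul_cancel₀ (pow_ne_zero _ hq), one_smul]
  have had' : a * d = d * a + (p - q⁻¹) • (γ * β) := by
    rw [← had]; abel
  have hd'gb : d' * (γ * β) * d' = (p⁻¹ * q⁻¹) • (γ * β * (d' * d')) := by
    rw [← mul_assoc d' γ β, hd'g, smul_mul_assoc, smul_mul_assoc,
      mul_assoc γ d' β, hd'b, mul_smul_comm, smul_mul_assoc, smul_smul,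
      ← mul_assoc γ β d', mul_assoc (γ * β)]
  have hd'a : d' * a = a * d' + ((p - q⁻¹) * (p⁻¹ * q⁻¹)) • (γ * β * (d' * d')) := by
    have h0 : d' * (a * d) * d' = d' * a := by
      rw [← mul_assoc, mul_assoc (d' * a), hd1, mul_one]
    rw [← h0, had', mul_add, add_mul, ← mul_assoc d' d a, hd2, one_mul,
      mul_smul_comm, smul_mul_assoc, hd'gb, smul_smul]
  have hgba : ∀ k : ℕ, γ * β * a ^ k * β = 0 := by
    intro k
    rw [mul_assoc γ β, hbak k, mul_smul_comm, smul_mul_assoc, mul_assoc γ,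
      mul_assoc (a ^ k), hbb, mul_zero, mul_zero, smul_zero]
  have hz1 : ∀ k : ℕ, β * a ^ k * γ * β = 0 := by
    intro k
    rw [mul_assoc β, hakg k, mul_smul_comm, smul_mul_assoc, ← mul_assoc β γ, hbg]
    simp only [neg_mul, smul_mul_assoc, neg_smul, smul_neg, smul_smul]
    rw [hgba k, smul_zero, neg_zero]
  have hkey : ∀ k : ℕ, β * a ^ k * d' * a = β * a ^ (k + 1) * d' := by
    intro k
    rw [mul_assoc (β * a ^ k), hd'a, mul_add, mul_smul_comm]
    have h1 : β * a ^ k * (a * d') = β * a ^ (k + 1) * d' := by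
      rw [← mul_assoc, mul_assoc β, ← pow_succ]
    have h2 : β * a ^ k * (γ * β * (d' * d')) = 0 := by
      rw [← mul_assoc, ← mul_assoc, ← mul_assoc (β * a ^ k) γ β, hz1 k,
        zero_mul, zero_mul]
    rw [h1, h2, smul_zero, add_zero]
  have hgbg : γ * β * γ = 0 := by
    rw [mul_assoc, hbg, mul_neg, mul_smul_comm, ← mul_assoc, hgg, zero_mul,
      smul_zero, neg_zero]
  have hz2 : γ * β * (d' * γ) = 0 := by
    rw [hd'g, mul_smul_comm, ← mul_assoc, hgbg, zero_mul, smul_zero]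
  have hzc : γ * (β * d' * γ) = 0 := by
    rw [← mul_assoc, ← mul_assoc, mul_assoc (γ * β), hz2]
  induction n, hn using Nat.le_induction with
  | base => simp
  | succ n hn ih =>
    rw [pow_succ, ih]
    have hT1 : a ^ n * (β * d' * γ) = q ^ n • (β * a ^ n * d' * γ) := by
      rw [← mul_assoc, ← mul_assoc, hakb n, smul_mul_assoc, smul_mul_assoc]
    have hT2 : β * a ^ (n - 1) * d' * γ * a = p⁻¹ • (β * a ^ n * d' * γ) := by
      have hk := hkey (n - 1)
      rw [Nat.sub_add_cancel hn] at hk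
      rw [mul_assoc, hga, mul_smul_comm, ← mul_assoc, hk]
    have hT3 : β * a ^ (n - 1) * d' * γ * (β * d' * γ) = 0 := by
      rw [mul_assoc, hzc, mul_zero]
    have hsum : (∑ k ∈ Finset.range (n + 1), q ^ (n - k) * p⁻¹ ^ k)
        = q ^ n + p⁻¹ * ∑ k ∈ Finset.range n, q ^ (n - 1 - k) * p⁻¹ ^ k := by
      rw [Finset.sum_range_succ']
      simp only [Nat.sub_zero, pow_zero, mul_one]
      rw [Finset.mul_sum, add_comm]
      congr 1
      refine Finset.sum_congr rfl fun k hk => ?_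
      have h : n - (k + 1) = n - 1 - k := by omega
      rw [h, pow_succ]
      ring
    rw [sub_mul, mul_sub, mul_sub, smul_mul_assoc, smul_mul_assoc,
      hT1, hT2, hT3, smul_zero, sub_zero, smul_smul, ← pow_succ,
      Nat.add_sub_cancel, hsum, add_smul, sub_sub]
    module
end

section
/- Lemma 2.2: For all natural numbers n, m ≥ 1, in the GL_{p,q}(1|1) algebra, aⁿ dᵐ = dᵐ aⁿ + (pⁿ - q⁻ⁿ)·(Σ_{k=0}^{m-1} p^{m-1-k} q^{-k}) · γ aⁿ⁻¹ dᵐ⁻¹ β. -/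
/-- Lemma 2.2: aⁿ dᵐ = dᵐ aⁿ + (pⁿ - q⁻ⁿ)((pᵐ - q⁻ᵐ)/(p - q⁻¹)) γ aⁿ⁻¹ dᵐ⁻¹ β. -/
theorem gl_pq_lemma_2_2
{K : Type*} [Field K] {R : Type*} [Ring R] [Algebra K R]
    (p q : K) (hp : p ≠ 0) (hq : q ≠ 0)
    (a β γ d : R)
    (hab : a * β = q • (β * a)) (hdb : d * β = q • (β * d))
    (hag : a * γ = p • (γ * a)) (hdg : d * γ = p • (γ * d))
    (hbg : β * γ = -((p * q⁻¹) • (γ * β)))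
    (hb2 : β ^ 2 = 0) (hg2 : γ ^ 2 = 0)
    (had : a * d - d * a = (p - q⁻¹) • (γ * β))
    (n m : ℕ) (hn : 1 ≤ n) (hm : 1 ≤ m) :
    a ^ n * d ^ m =
      d ^ m * a ^ n +
        ((p ^ n - q⁻¹ ^ n) * ∑ k ∈ Finset.range m, p ^ (m - 1 - k) * q⁻¹ ^ k) •
          (γ * a ^ (n - 1) * d ^ (m - 1) * β) := by
  have hgg : γ * γ = 0 := by simpa [sq] using hg2
  have had' : a * d = d * a + (p - q⁻¹) • (γ * β) := by rw [← had]; abel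
  have hda : d * a = a * d - (p - q⁻¹) • (γ * β) := by rw [← had]; abel
  -- β * a = q⁻¹ • (a * β)
  have hba : β * a = q⁻¹ • (a * β) := by
    rw [hab, smul_smul, inv_mul_cancel₀ hq, one_smul]
  have hbd1 : β * d = q⁻¹ • (d * β) := by
    rw [hdb, smul_smul, inv_mul_cancel₀ hq, one_smul]
  -- β * a^k = q⁻¹^k • (a^k * β)
  have hbapow : ∀ k : ℕ, β * a ^ k = (q⁻¹ ^ k) • (a ^ k * β) := by
    intro k
    induction k with
    | zero => simp
    | succ k ih =>
      rw [pow_succ, ← mul_assoc, ih, smul_mul_assoc, mul_assoc, hba,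
        mul_smul_comm, smul_smul, ← mul_assoc, ← pow_succ, ← pow_succ]
  -- β * d^k = q⁻¹^k • (d^k * β)
  have hbdpow : ∀ k : ℕ, β * d ^ k = (q⁻¹ ^ k) • (d ^ k * β) := by
    intro k
    induction k with
    | zero => simp
    | succ k ih =>
      rw [pow_succ, ← mul_assoc, ih, smul_mul_assoc, mul_assoc, hbd1,
        mul_smul_comm, smul_smul, ← mul_assoc, ← pow_succ, ← pow_succ]
  -- a^k * γ = p^k • (γ * a^k)
  have hagpow : ∀ k : ℕ, a ^ k * γ = (p ^ k) • (γ * a ^ k) := by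
    intro k
    induction k with
    | zero => simp
    | succ k ih =>
      rw [pow_succ, mul_assoc, hag, mul_smul_comm, ← mul_assoc, ih,
        smul_mul_assoc, smul_smul, mul_assoc, ← pow_succ, ← pow_succ']
  -- γ * a^k * γ = 0
  have hgag : ∀ k : ℕ, γ * a ^ k * γ = 0 := by
    intro k
    rw [mul_assoc, hagpow, mul_smul_comm, ← mul_assoc, hgg, zero_mul, smul_zero]
  -- swap lemma: γ * (d * a^k) = γ * (a^k * d)
  have hswap : ∀ k : ℕ, γ * (d * a ^ k) = γ * (a ^ k * d) := by
    intro k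
    induction k with
    | zero => simp
    | succ k ih =>
      calc γ * (d * a ^ (k + 1)) = γ * (d * a ^ k) * a := by
            rw [pow_succ, ← mul_assoc, ← mul_assoc, mul_assoc γ d]
        _ = γ * (a ^ k * d) * a := by rw [ih]
        _ = γ * a ^ k * (d * a) := by rw [← mul_assoc γ, mul_assoc (γ * a ^ k)]
        _ = γ * a ^ k * (a * d) - (p - q⁻¹) • (γ * a ^ k * γ * β) := by
            rw [hda, mul_sub, mul_smul_comm, ← mul_assoc (γ * a ^ k) γ β]
        _ = γ * (a ^ (k + 1) * d) := by
            rw [hgag, zero_mul, smul_zero, sub_zero, pow_succ]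
            simp only [← mul_assoc]
  -- Lemma N : a^(N+1) * d = d * a^(N+1) + (p^(N+1) - q⁻¹^(N+1)) • (γ * a^N * β)
  have lemN : ∀ N : ℕ, a ^ (N + 1) * d =
      d * a ^ (N + 1) + (p ^ (N + 1) - q⁻¹ ^ (N + 1)) • (γ * a ^ N * β) := by
    intro N
    induction N with
    | zero => simpa using had'
    | succ N ih =>
      calc a ^ (N + 2) * d = a * (a ^ (N + 1) * d) := by
            rw [pow_succ' a (N + 1), mul_assoc]
        _ = a * (d * a ^ (N + 1)) +
            (p ^ (N + 1) - q⁻¹ ^ (N + 1)) • (a * (γ * a ^ N * β)) := by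
            rw [ih, mul_add, mul_smul_comm]
        _ = (a * d) * a ^ (N + 1) +
            ((p ^ (N + 1) - q⁻¹ ^ (N + 1)) * p) • (γ * a ^ (N + 1) * β) := by
            rw [← mul_assoc, ← mul_assoc a (γ * a ^ N) β, ← mul_assoc a γ (a ^ N),
              hag, smul_mul_assoc, smul_mul_assoc, smul_smul,
              mul_assoc γ a (a ^ N), ← pow_succ']
        _ = d * a ^ (N + 2) + (p - q⁻¹) • (γ * (β * a ^ (N + 1))) +
            ((p ^ (N + 1) - q⁻¹ ^ (N + 1)) * p) • (γ * a ^ (N + 1) * β) := by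
            rw [had', add_mul, smul_mul_assoc, mul_assoc γ β, mul_assoc d a,
              ← pow_succ']
        _ = d * a ^ (N + 2) +
            (p ^ (N + 2) - q⁻¹ ^ (N + 2)) • (γ * a ^ (N + 1) * β) := by
            rw [hbapow, mul_smul_comm, smul_smul, ← mul_assoc γ, add_assoc,
              ← add_smul]
            congr 2
            ring
  -- main statement for n = N + 1, m = M + 1
  obtain ⟨N, rfl⟩ : ∃ N, n = N + 1 := ⟨n - 1, by omega⟩
  obtain ⟨M, rfl⟩ : ∃ M, m = M + 1 := ⟨m - 1, by omega⟩
  clear hm hn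
  simp only [Nat.add_sub_cancel]
  induction M with
  | zero => simpa using lemN N
  | succ M ih =>
    have key1 : d * (γ * a ^ N * d ^ M * β) = p • (γ * (d * a ^ N) * d ^ M * β) := by
      rw [← mul_assoc, ← mul_assoc, ← mul_assoc, hdg, smul_mul_assoc,
        smul_mul_assoc, smul_mul_assoc, mul_assoc γ d]
    have key2 : γ * (a ^ N * d) * d ^ M * β = γ * a ^ N * d ^ (M + 1) * β := by
      rw [← mul_assoc γ, mul_assoc (γ * a ^ N), ← pow_succ']
    have hsum : (∑ k ∈ Finset.range (M + 1 + 1), p ^ (M + 1 - k) * q⁻¹ ^ k) =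
        p * (∑ k ∈ Finset.range (M + 1), p ^ (M - k) * q⁻¹ ^ k) + q⁻¹ ^ (M + 1) := by
      rw [Finset.sum_range_succ, Finset.mul_sum]
      congr 1
      · apply Finset.sum_congr rfl
        intro k hk
        rw [Finset.mem_range] at hk
        have h1 : M + 1 - k = (M - k) + 1 := by omega
        rw [h1, pow_succ]
        ring
      · simp
    calc a ^ (N + 1) * d ^ (M + 1 + 1) = (a ^ (N + 1) * d) * d ^ (M + 1) := by
          rw [pow_succ' d (M + 1), ← mul_assoc]
      _ = d * (a ^ (N + 1) * d ^ (M + 1)) +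
          (p ^ (N + 1) - q⁻¹ ^ (N + 1)) • (γ * a ^ N * (β * d ^ (M + 1))) := by
          rw [lemN, add_mul, smul_mul_assoc, mul_assoc d, mul_assoc (γ * a ^ N)]
      _ = d * (d ^ (M + 1) * a ^ (N + 1)) +
          ((p ^ (N + 1) - q⁻¹ ^ (N + 1)) *
            ∑ k ∈ Finset.range (M + 1), p ^ (M - k) * q⁻¹ ^ k) •
            (d * (γ * a ^ N * d ^ M * β)) +
          ((p ^ (N + 1) - q⁻¹ ^ (N + 1)) * q⁻¹ ^ (M + 1)) •
            (γ * a ^ N * d ^ (M + 1) * β) := by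
          rw [ih, mul_add, mul_smul_comm, hbdpow, mul_smul_comm, smul_smul,
            ← mul_assoc (γ * a ^ N)]
      _ = d ^ (M + 1 + 1) * a ^ (N + 1) +
          ((p ^ (N + 1) - q⁻¹ ^ (N + 1)) *
            ∑ k ∈ Finset.range (M + 1), p ^ (M - k) * q⁻¹ ^ k) •
            (p • (γ * (a ^ N * d) * d ^ M * β)) +
          ((p ^ (N + 1) - q⁻¹ ^ (N + 1)) * q⁻¹ ^ (M + 1)) •
            (γ * a ^ N * d ^ (M + 1) * β) := by
          rw [key1, hswap, ← mul_assoc d, ← pow_succ']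
      _ = d ^ (M + 1 + 1) * a ^ (N + 1) +
          ((p ^ (N + 1) - q⁻¹ ^ (N + 1)) *
            ∑ k ∈ Finset.range (M + 1 + 1), p ^ (M + 1 - k) * q⁻¹ ^ k) •
            (γ * a ^ N * d ^ (M + 1) * β) := by
          rw [key2, smul_smul, add_assoc, ← add_smul, hsum]
          congr 2
          ring
end

section
/- For any natural number n ≥ 1, in the GL_{p,q}(1|1) algebra, Δ₂ⁿ = aⁿdⁿ - p·(Σ_{k=0}^{n-1} p^{n-1-k} q^{-k})·aⁿ⁻¹ γ dⁿ⁻¹ β, where Δ₂ = da - q⁻¹γβ. -/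
section
variable {K : Type*} [Field K] {R : Type*} [Ring R] [Algebra K R]

theorem glq_aux1 {x y : R} {c : K} (h : x * y = c • (y * x)) (n : ℕ) :
    x ^ n * y = c ^ n • (y * x ^ n) := by
  induction n with
  | zero => simp
  | succ n ih =>
    rw [pow_succ, mul_assoc, h, mul_smul_comm, ← mul_assoc, ih, smul_mul_assoc,
      smul_smul, mul_assoc, ← pow_succ, ← pow_succ']

theorem glq_aux1' {x y : R} {c : K} (hc : c ≠ 0) (h : x * y = c • (y * x)) (n : ℕ) :
    y * x ^ n = (c ^ n)⁻¹ • (x ^ n * y) := by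
  rw [glq_aux1 h n, smul_smul, inv_mul_cancel₀ (pow_ne_zero _ hc), one_smul]

theorem glq_L5 (p q : K) (a β γ d : R)
    (hdb : d * β = q • (β * d)) (hdg : d * γ = p • (γ * d))
    (had : a * d - d * a = (p - q⁻¹) • (γ * β)) (n : ℕ) :
    d ^ (n+1) * a = a * d ^ (n+1) -
      ((p - q⁻¹) * ∑ j ∈ Finset.range (n+1), (p*q)^j) • (γ * β * d ^ n) := by
  have hda : d * a = a * d - (p - q⁻¹) • (γ * β) := by
    rw [← had, sub_sub_cancel]
  have hdgb : d * (γ * β) = (p*q) • (γ * β * d) := by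
    rw [← mul_assoc, hdg, smul_mul_assoc, mul_assoc, hdb, mul_smul_comm, smul_smul,
      ← mul_assoc]
  induction n with
  | zero => simpa using hda
  | succ n ih =>
    rw [pow_succ' d (n+1), mul_assoc, ih, mul_sub, ← mul_assoc, hda, sub_mul,
      mul_smul_comm, ← mul_assoc d (γ*β) (d^n), hdgb,
      geom_sum_succ (x := p*q) (n := n+1)]
    simp only [smul_smul, smul_mul_assoc, mul_smul_comm, mul_assoc, pow_succ']
    match_scalars <;> ring

theorem glq_L6 (p q : K) (a β γ d : R)
    (hdg : d * γ = p • (γ * d))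
    (hg2 : γ ^ 2 = 0)
    (had : a * d - d * a = (p - q⁻¹) • (γ * β)) (m : ℕ) :
    γ * (d ^ m * a) = γ * a * d ^ m := by
  have hda : d * a = a * d - (p - q⁻¹) • (γ * β) := by
    rw [← had, sub_sub_cancel]
  have h0 : ∀ x : R, γ * (γ * x) = 0 := fun x => by
    rw [← mul_assoc, ← sq, hg2, zero_mul]
  induction m with
  | zero => simp [mul_assoc]
  | succ m ih =>
    have hgd : γ * (d ^ m * (γ * β)) = 0 := by
      rw [← mul_assoc (d^m) γ β, glq_aux1 hdg m]
      simp only [smul_mul_assoc, mul_smul_comm, mul_assoc, h0, smul_zero]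
    rw [pow_succ, mul_assoc, hda, mul_sub, mul_sub, mul_smul_comm, mul_smul_comm,
      hgd, smul_zero, sub_zero, ← mul_assoc (d^m) a d, ← mul_assoc γ (d^m*a) d, ih,
      mul_assoc (γ*a) (d^m) d]

theorem glq_S1 (p q : K) (hq : q ≠ 0) (m : ℕ) :
    ∑ j ∈ Finset.range (m+1), (p*q)^j
      = q^m * ∑ k ∈ Finset.range (m+1), p^(m-k) * q⁻¹^k := by
  rw [Finset.mul_sum, ← Finset.sum_range_reflect]
  refine Finset.sum_congr rfl fun k hk => ?_
  have hk' : k ≤ m := by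
    have := Finset.mem_range.mp hk; omega
  have h : m + 1 - 1 - k = m - k := by omega
  have hqq : q ^ (m-k) = q^m * (q^k)⁻¹ := by
    rw [pow_sub₀ q hq hk']
  rw [h, mul_pow, inv_pow, hqq]
  ring

theorem glq_S2 (p q : K) (m : ℕ) :
    ∑ k ∈ Finset.range (m+2), p^(m+1-k) * q⁻¹^k
      = p^(m+1) + q⁻¹ * ∑ k ∈ Finset.range (m+1), p^(m-k) * q⁻¹^k := by
  rw [Finset.sum_range_succ' _ (m+1), Finset.mul_sum]
  simp only [pow_zero, mul_one, Nat.sub_zero]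
  rw [add_comm]
  congr 1
  refine Finset.sum_congr rfl fun k hk => ?_
  have h : m + 1 - (k+1) = m - k := by omega
  rw [h, pow_succ]
  ring

end

/-- Δ₂ⁿ = aⁿdⁿ - p((pⁿ - q⁻ⁿ)/(p - q⁻¹)) aⁿ⁻¹ γ dⁿ⁻¹ β, for Δ₂ = da - q⁻¹γβ. -/
theorem gl_pq_Delta2_pow
{K : Type*} [Field K] {R : Type*} [Ring R] [Algebra K R]
    (p q : K) (hp : p ≠ 0) (hq : q ≠ 0)
    (a β γ d : R)
    (hab : a * β = q • (β * a)) (hdb : d * β = q • (β * d))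
    (hag : a * γ = p • (γ * a)) (hdg : d * γ = p • (γ * d))
    (hbg : β * γ = -((p * q⁻¹) • (γ * β)))
    (hb2 : β ^ 2 = 0) (hg2 : γ ^ 2 = 0)
    (had : a * d - d * a = (p - q⁻¹) • (γ * β))
    (n : ℕ) (hn : 1 ≤ n) :
    (d * a - q⁻¹ • (γ * β)) ^ n =
      a ^ n * d ^ n -
        (p * ∑ k ∈ Finset.range n, p ^ (n - 1 - k) * q⁻¹ ^ k) •
          (a ^ (n - 1) * γ * d ^ (n - 1) * β) := by
  have hda : d * a = a * d - (p - q⁻¹) • (γ * β) := by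
    rw [← had, sub_sub_cancel]
  have hΔ : d * a - q⁻¹ • (γ * β) = a * d - p • (γ * β) := by
    rw [hda]
    match_scalars <;> ring
  induction n, hn using Nat.le_induction with
  | base =>
    simp only [pow_one, Nat.sub_self, pow_zero, one_mul, Finset.range_one,
      Finset.sum_singleton, Nat.zero_sub, mul_one, hΔ]
  | succ n hn ih =>
    obtain ⟨m, rfl⟩ : ∃ m, n = m + 1 := ⟨n - 1, (Nat.succ_pred_eq_of_pos hn).symm⟩
    simp only [Nat.add_sub_cancel] at ih ⊢
    -- helper commutation facts
    have hba : β * a = q⁻¹ • (a * β) := by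
      rw [hab, smul_smul, inv_mul_cancel₀ hq, one_smul]
    have hbd1 : β * d = q⁻¹ • (d * β) := by
      rw [hdb, smul_smul, inv_mul_cancel₀ hq, one_smul]
    have hga : γ * a = p⁻¹ • (a * γ) := by
      rw [hag, smul_smul, inv_mul_cancel₀ hp, one_smul]
    have hbdm : β * d ^ (m+1) = (q^(m+1))⁻¹ • (d^(m+1) * β) := glq_aux1' hq hdb (m+1)
    have hE1 : a^(m+1) * d^(m+1) * (a * d)
        = a^(m+2) * d^(m+2) -
          ((p - q⁻¹) * (∑ j ∈ Finset.range (m+1), (p*q)^j) * (q^(m+1))⁻¹) •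
            (a^(m+1) * γ * d^(m+1) * β) := by
      rw [show a^(m+1)*d^(m+1)*(a*d) = a^(m+1)*((d^(m+1)*a)*d) by
            simp only [mul_assoc],
        glq_L5 p q a β γ d hdb hdg had m, sub_mul, mul_sub, smul_mul_assoc,
        mul_smul_comm,
        show γ*β*d^m*d = γ*(β*d^(m+1)) by
          simp only [mul_assoc, pow_succ],
        hbdm]
      simp only [mul_smul_comm, smul_mul_assoc, smul_smul, mul_assoc, pow_succ]
    have hE2 : a^(m+1) * d^(m+1) * (γ * β)
        = (p^(m+1)) • (a^(m+1) * γ * d^(m+1) * β) := by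
      rw [mul_assoc, ← mul_assoc (d^(m+1)) γ β, glq_aux1 hdg (m+1)]
      simp only [mul_smul_comm, smul_mul_assoc, mul_assoc]
    have hE4 : a^m * γ * d^m * β * (γ * β) = 0 := by
      have hb0 : β * (γ * β) = 0 := by
        rw [← mul_assoc, hbg, neg_mul, smul_mul_assoc, mul_assoc, ← sq, hb2,
          mul_zero, smul_zero, neg_zero]
      simp only [mul_assoc, hb0, mul_zero]
    have hE3 : a^m * γ * d^m * β * (a * d)
        = (q⁻¹ * (q⁻¹ * p⁻¹)) • (a^(m+1) * γ * d^(m+1) * β) := by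
      have hbad : β * (a * d) = (q⁻¹ * q⁻¹) • (a * (d * β)) := by
        rw [← mul_assoc, hba, smul_mul_assoc, mul_assoc, hbd1, mul_smul_comm,
          smul_smul]
      rw [show a^m*γ*d^m*β*(a*d) = a^m*(γ*(d^m*(β*(a*d)))) by simp only [mul_assoc],
        hbad]
      simp only [mul_smul_comm]
      rw [show d^m*(a*(d*β)) = (d^m*a)*(d*β) from (mul_assoc _ _ _).symm,
        ← mul_assoc γ (d^m*a) (d*β), glq_L6 p q a β γ d hdg hg2 had m,
        hga]
      simp only [smul_mul_assoc, mul_smul_comm, smul_smul, mul_assoc, pow_succ]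
    rw [pow_succ, ih, hΔ, sub_mul, mul_sub, mul_sub]
    simp only [smul_mul_assoc, mul_smul_comm, smul_smul]
    rw [hE1, hE2, hE3, hE4, smul_zero, glq_S2 p q m, glq_S1 p q hq m]
    match_scalars
    · ring
    · field_simp
      ring
end

section
/- Lemma 3.1: For T = (a, β; γ, d) over the GL_{p,q}(1|1) algebra and natural number n ≥ 1, the matrix Tⁿ has entries A_n = aⁿ + (Σ_{k=0}^{n-2} ⟨n-k-1⟩_{pq} a^{n-k-2}(q⁻¹d)^k) βγ, B_n = (Σ_{k=0}^{n-1} a^{n-k-1}(q⁻¹d)^k) β, C_n = (Σ_{k=0}^{n-1} d^{n-k-1}(p⁻¹a)^k) γ, D_n = dⁿ + (Σ_{k=0}^{n-2} ⟨n-k-1⟩_{pq} d^{n-k-2}(p⁻¹a)^k) γβ, where ⟨N⟩_{pq} = Σ_{j=0}^{N-1}(pq)^{-j}. -/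
section
variable {K : Type*} [Field K] {R : Type*} [Ring R] [Algebra K R]

lemma glpq_pow_comm (c : K) (x y : R) (h : x * y = c • (y * x)) :
    ∀ m : ℕ, x ^ m * y = c ^ m • (y * x ^ m) := by
  intro m
  induction m with
  | zero => simp
  | succ m ih =>
    rw [pow_succ', mul_assoc, ih, mul_smul_comm, ← mul_assoc, h, smul_mul_assoc,
      smul_smul, mul_assoc, ← pow_succ', ← pow_succ]

lemma glpq_key (p q : K) (hp : p ≠ 0) (hq : q ≠ 0)
    (a β γ d : R)
    (hab : a * β = q • (β * a)) (hdb : d * β = q • (β * d))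
    (hag : a * γ = p • (γ * a)) (hdg : d * γ = p • (γ * d))
    (hbg : β * γ = -((p * q⁻¹) • (γ * β)))
    (hb2 : β ^ 2 = 0) (hg2 : γ ^ 2 = 0)
    (had : a * d - d * a = (p - q⁻¹) • (γ * β))
    (n : ℕ) (hn : 1 ≤ n) :
    ((!![a, β; γ, d] : Matrix (Fin 2) (Fin 2) R) ^ n) 0 0 =
      a ^ n + (∑ k ∈ Finset.range (n - 1),
        ((∑ j ∈ Finset.range (n - k - 1), (p * q)⁻¹ ^ j) * q⁻¹ ^ k) •
          (a ^ (n - k - 2) * d ^ k)) * (β * γ) ∧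
    ((!![a, β; γ, d] : Matrix (Fin 2) (Fin 2) R) ^ n) 0 1 =
      (∑ k ∈ Finset.range n, q⁻¹ ^ k • (a ^ (n - k - 1) * d ^ k)) * β := by
  have hpq : (p * q) ≠ 0 := mul_ne_zero hp hq
  -- zero lemmas
  have hbgb : (β * γ) * β = 0 := by
    rw [hbg, neg_mul, smul_mul_assoc, mul_assoc, ← sq, hb2, mul_zero, smul_zero, neg_zero]
  have hgbbg : (γ * β) * (β * γ) = 0 := by
    rw [mul_assoc, ← mul_assoc β β, ← sq, hb2, zero_mul, mul_zero]
  -- scalar commutation lemmas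
  have habg : a * (β * γ) = (p * q) • ((β * γ) * a) := by
    calc a * (β * γ) = (a * β) * γ := (mul_assoc _ _ _).symm
      _ = (q • (β * a)) * γ := by rw [hab]
      _ = q • (β * (a * γ)) := by rw [smul_mul_assoc, mul_assoc]
      _ = q • (β * (p • (γ * a))) := by rw [hag]
      _ = (p * q) • ((β * γ) * a) := by
          rw [mul_smul_comm, smul_smul, mul_comm q p, mul_assoc]
  have hdbg : d * (β * γ) = (p * q) • ((β * γ) * d) := by
    calc d * (β * γ) = (d * β) * γ := (mul_assoc _ _ _).symm
      _ = (q • (β * d)) * γ := by rw [hdb]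
      _ = q • (β * (d * γ)) := by rw [smul_mul_assoc, mul_assoc]
      _ = q • (β * (p • (γ * d))) := by rw [hdg]
      _ = (p * q) • ((β * γ) * d) := by
          rw [mul_smul_comm, smul_smul, mul_comm q p, mul_assoc]
  have hbga : (β * γ) * a = (p * q)⁻¹ • (a * (β * γ)) := by
    rw [habg, inv_smul_smul₀ hpq]
  have hbd : β * d = q⁻¹ • (d * β) := by rw [hdb, inv_smul_smul₀ hq]
  -- commuting a past d^k in presence of (β*γ)
  have hcomm : ∀ k : ℕ, (d ^ k * a) * (β * γ) = (a * d ^ k) * (β * γ) := by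
    intro k
    induction k with
    | zero => simp
    | succ k ih =>
      have h1 : d * a = a * d - (p - q⁻¹) • (γ * β) := by
        rw [← had, sub_sub_cancel]
      calc d ^ (k+1) * a * (β * γ) = d * (d ^ k * a * (β * γ)) := by
            rw [pow_succ', mul_assoc d (d ^ k) a, mul_assoc d (d ^ k * a) (β * γ)]
        _ = d * (a * d ^ k * (β * γ)) := by rw [ih]
        _ = ((d * a) * d ^ k) * (β * γ) := by
            rw [← mul_assoc d (a * d ^ k) (β * γ), ← mul_assoc d a (d ^ k)]
        _ = ((a * d - (p - q⁻¹) • (γ * β)) * d ^ k) * (β * γ) := by rw [h1]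
        _ = (a * d * d ^ k) * (β * γ)
              - (p - q⁻¹) • ((γ * β) * (d ^ k * (β * γ))) := by
            rw [sub_mul, sub_mul, smul_mul_assoc, smul_mul_assoc, mul_assoc (γ * β) (d ^ k) (β * γ)]
        _ = (a * d ^ (k+1)) * (β * γ) - 0 := by
            rw [glpq_pow_comm _ _ _ hdbg k, mul_smul_comm,
              ← mul_assoc (γ * β) (β * γ) (d ^ k), hgbbg, zero_mul,
              smul_zero, smul_zero, mul_assoc a d (d ^ k), ← pow_succ']
        _ = (a * d ^ (k+1)) * (β * γ) := sub_zero _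
  -- workhorse step lemmas
  have hstep_a : ∀ j k : ℕ, (a ^ j * d ^ k) * (β * γ) * a
      = (p * q)⁻¹ • ((a ^ (j+1) * d ^ k) * (β * γ)) := by
    intro j k
    calc (a ^ j * d ^ k) * (β * γ) * a = (a ^ j * d ^ k) * ((β * γ) * a) := mul_assoc _ _ _
      _ = (p * q)⁻¹ • ((a ^ j * d ^ k) * (a * (β * γ))) := by rw [hbga, mul_smul_comm]
      _ = (p * q)⁻¹ • (a ^ j * ((d ^ k * a) * (β * γ))) := by
          rw [mul_assoc, ← mul_assoc (d ^ k)]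
      _ = (p * q)⁻¹ • (a ^ j * ((a * d ^ k) * (β * γ))) := by rw [hcomm k]
      _ = (p * q)⁻¹ • ((a ^ (j+1) * d ^ k) * (β * γ)) := by
          rw [← mul_assoc (a ^ j) (a * d ^ k) (β * γ), ← mul_assoc (a ^ j) a (d ^ k), ← pow_succ]
  have hstep_b : ∀ j k : ℕ, (a ^ j * d ^ k) * β * d = q⁻¹ • ((a ^ j * d ^ (k+1)) * β) := by
    intro j k
    calc (a ^ j * d ^ k) * β * d = (a ^ j * d ^ k) * (β * d) := mul_assoc _ _ _
      _ = q⁻¹ • ((a ^ j * d ^ k) * (d * β)) := by rw [hbd, mul_smul_comm]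
      _ = q⁻¹ • ((a ^ j * d ^ (k+1)) * β) := by
          rw [mul_assoc (a ^ j) (d ^ k) (d * β), ← mul_assoc (d ^ k) d β, ← pow_succ,
            ← mul_assoc (a ^ j) (d ^ (k+1)) β]
  -- matrix entry recursion
  have hT : ∀ (M : Matrix (Fin 2) (Fin 2) R),
      (M * !![a, β; γ, d]) 0 0 = M 0 0 * a + M 0 1 * γ ∧
      (M * !![a, β; γ, d]) 0 1 = M 0 0 * β + M 0 1 * d := by
    intro M
    constructor <;> (rw [Matrix.mul_apply, Fin.sum_univ_two]; simp)
  induction n, hn using Nat.le_induction with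
  | base =>
    constructor
    · simp
    · simp
  | succ n hn1 ih =>
    obtain ⟨IH00, IH01⟩ := ih
    obtain ⟨m, rfl⟩ : ∃ m, n = m + 1 := ⟨n - 1, by omega⟩
    have e00 : ((!![a, β; γ, d] : Matrix (Fin 2) (Fin 2) R) ^ (m + 1 + 1)) 0 0
        = ((!![a, β; γ, d] : Matrix (Fin 2) (Fin 2) R) ^ (m + 1)) 0 0 * a
          + ((!![a, β; γ, d] : Matrix (Fin 2) (Fin 2) R) ^ (m + 1)) 0 1 * γ := by
      rw [pow_succ]; exact (hT _).1
    have e01 : ((!![a, β; γ, d] : Matrix (Fin 2) (Fin 2) R) ^ (m + 1 + 1)) 0 1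
        = ((!![a, β; γ, d] : Matrix (Fin 2) (Fin 2) R) ^ (m + 1)) 0 0 * β
          + ((!![a, β; γ, d] : Matrix (Fin 2) (Fin 2) R) ^ (m + 1)) 0 1 * d := by
      rw [pow_succ]; exact (hT _).2
    constructor
    · -- entry (0,0)
      rw [e00, IH00, IH01]
      simp only [Nat.add_sub_cancel]
      rw [add_mul, ← pow_succ, add_assoc]
      congr 1
      conv_rhs => rw [Finset.sum_mul, Finset.sum_range_succ]
      rw [Finset.sum_mul, Finset.sum_mul, Finset.sum_mul, Finset.sum_mul,
        Finset.sum_range_succ, ← add_assoc, ← Finset.sum_add_distrib]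
      congr 1
      · refine Finset.sum_congr rfl fun k hk => ?_
        have hk' : k < m := Finset.mem_range.mp hk
        have E1 : m + 1 - k - 2 = m - k - 1 := by omega
        have E2 : m - k - 1 + 1 = m - k := by omega
        have E3 : m + 1 - k - 1 = m - k := by omega
        have E4 : m + 1 + 1 - k - 2 = m - k := by omega
        have E5 : m + 1 + 1 - k - 1 = (m - k) + 1 := by omega
        rw [E1, E3, E4, E5]
        rw [smul_mul_assoc, smul_mul_assoc, smul_mul_assoc, smul_mul_assoc, smul_mul_assoc,
          hstep_a (m - k - 1) k, E2, smul_smul,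
          mul_assoc (a ^ (m - k) * d ^ k) β γ, ← add_smul]
        congr 1
        rw [geom_sum_succ]
        ring
      · have E1 : m + 1 - m - 1 = 0 := by omega
        have E2 : m + 1 + 1 - m - 2 = 0 := by omega
        have E3 : m + 1 + 1 - m - 1 = 1 := by omega
        rw [E1, E2, E3]
        simp [Finset.sum_range_one, smul_mul_assoc, mul_assoc]
    · -- entry (0,1)
      rw [e01, IH00, IH01]
      rw [add_mul, mul_assoc _ (β * γ) β, hbgb, mul_zero, add_zero]
      conv_rhs => rw [Finset.sum_mul, Finset.sum_range_succ']
      rw [Finset.sum_mul, Finset.sum_mul, add_comm]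
      congr 1
      · refine Finset.sum_congr rfl fun k hk => ?_
        have hk' : k < m + 1 := Finset.mem_range.mp hk
        have E3 : m + 1 - k - 1 = m - k := by omega
        have E7 : m + 1 + 1 - (k + 1) - 1 = m - k := by omega
        rw [E3, E7, smul_mul_assoc, smul_mul_assoc, smul_mul_assoc,
          hstep_b (m - k) k, smul_smul, ← pow_succ]
      · simp
end

/-- Lemma 3.1: explicit form of the entries of Tⁿ, where
⟨N⟩_{pq} = Σ_{j=0}^{N-1}(pq)⁻ʲ. -/
theorem gl_pq_lemma_3_1
{K : Type*} [Field K] {R : Type*} [Ring R] [Algebra K R]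
    (p q : K) (hp : p ≠ 0) (hq : q ≠ 0)
    (a β γ d : R)
    (hab : a * β = q • (β * a)) (hdb : d * β = q • (β * d))
    (hag : a * γ = p • (γ * a)) (hdg : d * γ = p • (γ * d))
    (hbg : β * γ = -((p * q⁻¹) • (γ * β)))
    (hb2 : β ^ 2 = 0) (hg2 : γ ^ 2 = 0)
    (had : a * d - d * a = (p - q⁻¹) • (γ * β))
    (n : ℕ) (hn : 1 ≤ n) :
    ((!![a, β; γ, d] : Matrix (Fin 2) (Fin 2) R) ^ n) 0 0 =
      a ^ n + (∑ k ∈ Finset.range (n - 1),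
        ((∑ j ∈ Finset.range (n - k - 1), (p * q)⁻¹ ^ j) * q⁻¹ ^ k) •
          (a ^ (n - k - 2) * d ^ k)) * (β * γ) ∧
    ((!![a, β; γ, d] : Matrix (Fin 2) (Fin 2) R) ^ n) 0 1 =
      (∑ k ∈ Finset.range n, q⁻¹ ^ k • (a ^ (n - k - 1) * d ^ k)) * β ∧
    ((!![a, β; γ, d] : Matrix (Fin 2) (Fin 2) R) ^ n) 1 0 =
      (∑ k ∈ Finset.range n, p⁻¹ ^ k • (d ^ (n - k - 1) * a ^ k)) * γ ∧
    ((!![a, β; γ, d] : Matrix (Fin 2) (Fin 2) R) ^ n) 1 1 =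
      d ^ n + (∑ k ∈ Finset.range (n - 1),
        ((∑ j ∈ Finset.range (n - k - 1), (p * q)⁻¹ ^ j) * p⁻¹ ^ k) •
          (d ^ (n - k - 2) * a ^ k)) * (γ * β) := by
  have hgb : γ * β = -((q * p⁻¹) • (β * γ)) := by
    rw [hbg, smul_neg, smul_smul]
    have h1 : q * p⁻¹ * (p * q⁻¹) = 1 := by field_simp
    rw [h1, one_smul, neg_neg]
  have had' : d * a - a * d = (q - p⁻¹) • (β * γ) := by
    have h1 : d * a - a * d = -((p - q⁻¹) • (γ * β)) := by
      rw [← had, neg_sub]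
    rw [h1, hgb, smul_neg, neg_neg, smul_smul]
    congr 1
    field_simp
  obtain ⟨h00, h01⟩ := glpq_key p q hp hq a β γ d hab hdb hag hdg hbg hb2 hg2 had n hn
  obtain ⟨h11, h10⟩ := glpq_key q p hq hp d γ β a hdg hag hdb hab hgb hg2 hb2 had' n hn
  -- relate the entries of the swapped matrix power to those of Tⁿ
  have hswap : (!![a, β; γ, d] : Matrix (Fin 2) (Fin 2) R)
      = (Matrix.reindexAlgEquiv K R (Equiv.swap (0 : Fin 2) 1)) !![d, γ; β, a] := by
    ext i j
    fin_cases i <;> fin_cases j <;>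
      simp [Matrix.reindexAlgEquiv, Matrix.reindex, Equiv.swap_apply_def]
  have hpow : ∀ i j : Fin 2,
      ((!![a, β; γ, d] : Matrix (Fin 2) (Fin 2) R) ^ n) i j
        = ((!![d, γ; β, a] : Matrix (Fin 2) (Fin 2) R) ^ n)
            (Equiv.swap (0 : Fin 2) 1 i) (Equiv.swap (0 : Fin 2) 1 j) := by
    intro i j
    rw [hswap, ← map_pow]
    simp [Matrix.reindexAlgEquiv, Matrix.reindex]
  refine ⟨h00, h01, ?_, ?_⟩
  · rw [hpow 1 0]
    simpa using h10
  · rw [hpow 1 1]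
    rw [mul_comm p q]
    simpa using h11
end

section
/- Lemma 3.2 (off-diagonal relations): If T = (a, β; γ, d) ∈ GL_{p,q}(1|1) and Tⁿ = (A_n, B_n; C_n, D_n), then A_n B_n = qⁿ B_n A_n, D_n B_n = qⁿ B_n D_n, A_n C_n = pⁿ C_n A_n, D_n C_n = pⁿ C_n D_n, B_n² = 0, C_n² = 0, and qⁿ B_n C_n + pⁿ C_n B_n = 0. -/
set_option maxHeartbeats 16000000

namespace GLpqAux

theorem mar {R : Type*} [Ring R] {x y z : R} (h : x * y = z) (t : R) :
    x * (y * t) = z * t := by rw [← mul_assoc, h]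

variable {K : Type*} [Field K] {R : Type*} [Ring R] [Algebra K R]

structure Conds (p q : K) (m : ℕ) (a β γ d A B C D E₁ E₂ E₃ E₄ E₅ : R) : Prop where
  hAb : A*β = (q^m) • (β*A)
  hAg : A*γ = (p^m) • (γ*A)
  hDb : D*β = (q^m) • (β*D)
  hDg : D*γ = (p^m) • (γ*D)
  hbB : β*B = 0
  hBb : B*β = 0
  hgC : γ*C = 0
  hCg : C*γ = 0
  hBg : B*γ = (-(p^m * q⁻¹)) • (γ*B)
  hCb : C*β = (-(q^m * p⁻¹)) • (β*C)
  haB : a*B = q • (B*a)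
  hdB : d*B = q • (B*d)
  haC : a*C = p • (C*a)
  hdC : d*C = p • (C*d)
  haA : a*A = A*a + E₁
  hdA : d*A = A*d + E₂
  haD : a*D = D*a + E₃
  hdD : d*D = D*d + E₄
  hDA : D*A = A*D + E₅
  hAB : A*B = (q^m) • (B*A)
  hDB : D*B = (q^m) • (B*D)
  hAC : A*C = (p^m) • (C*A)
  hDC : D*C = (p^m) • (C*D)
  hBB : B*B = 0
  hCC : C*C = 0
  hBC : B*C = (-(p^m * (q^m)⁻¹)) • (C*B)
  c1bE : β*E₁ = 0
  c1Eb : E₁*β = 0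
  c1gE : γ*E₁ = 0
  c1Eg : E₁*γ = 0
  c1aE : a*E₁ = (p*q) • (E₁*a)
  c1dE : d*E₁ = (p*q) • (E₁*d)
  c1AE : A*E₁ = ((p*q)^m) • (E₁*A)
  c1DE : D*E₁ = ((p*q)^m) • (E₁*D)
  c1BE : B*E₁ = 0
  c1CE : C*E₁ = 0
  c1EB : E₁*B = 0
  c1EC : E₁*C = 0
  c2bE : β*E₂ = 0
  c2Eb : E₂*β = 0
  c2gE : γ*E₂ = 0
  c2Eg : E₂*γ = 0
  c2aE : a*E₂ = (p*q) • (E₂*a)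
  c2dE : d*E₂ = (p*q) • (E₂*d)
  c2AE : A*E₂ = ((p*q)^m) • (E₂*A)
  c2DE : D*E₂ = ((p*q)^m) • (E₂*D)
  c2BE : B*E₂ = 0
  c2CE : C*E₂ = 0
  c2EB : E₂*B = 0
  c2EC : E₂*C = 0
  c3bE : β*E₃ = 0
  c3Eb : E₃*β = 0
  c3gE : γ*E₃ = 0
  c3Eg : E₃*γ = 0
  c3aE : a*E₃ = (p*q) • (E₃*a)
  c3dE : d*E₃ = (p*q) • (E₃*d)
  c3AE : A*E₃ = ((p*q)^m) • (E₃*A)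
  c3DE : D*E₃ = ((p*q)^m) • (E₃*D)
  c3BE : B*E₃ = 0
  c3CE : C*E₃ = 0
  c3EB : E₃*B = 0
  c3EC : E₃*C = 0
  c4bE : β*E₄ = 0
  c4Eb : E₄*β = 0
  c4gE : γ*E₄ = 0
  c4Eg : E₄*γ = 0
  c4aE : a*E₄ = (p*q) • (E₄*a)
  c4dE : d*E₄ = (p*q) • (E₄*d)
  c4AE : A*E₄ = ((p*q)^m) • (E₄*A)
  c4DE : D*E₄ = ((p*q)^m) • (E₄*D)
  c4BE : B*E₄ = 0
  c4CE : C*E₄ = 0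
  c4EB : E₄*B = 0
  c4EC : E₄*C = 0
  c5bE : β*E₅ = 0
  c5Eb : E₅*β = 0
  c5gE : γ*E₅ = 0
  c5Eg : E₅*γ = 0
  c5aE : a*E₅ = (p*q) • (E₅*a)
  c5dE : d*E₅ = (p*q) • (E₅*d)
  c5AE : A*E₅ = ((p*q)^m) • (E₅*A)
  c5DE : D*E₅ = ((p*q)^m) • (E₅*D)
  c5BE : B*E₅ = 0
  c5CE : C*E₅ = 0
  c5EB : E₅*B = 0
  c5EC : E₅*C = 0
  e11 : E₁*E₁ = 0
  e12 : E₁*E₂ = 0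
  e13 : E₁*E₃ = 0
  e14 : E₁*E₄ = 0
  e15 : E₁*E₅ = 0
  e21 : E₂*E₁ = 0
  e22 : E₂*E₂ = 0
  e23 : E₂*E₃ = 0
  e24 : E₂*E₄ = 0
  e25 : E₂*E₅ = 0
  e31 : E₃*E₁ = 0
  e32 : E₃*E₂ = 0
  e33 : E₃*E₃ = 0
  e34 : E₃*E₄ = 0
  e35 : E₃*E₅ = 0
  e41 : E₄*E₁ = 0
  e42 : E₄*E₂ = 0
  e43 : E₄*E₃ = 0
  e44 : E₄*E₄ = 0
  e45 : E₄*E₅ = 0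
  e51 : E₅*E₁ = 0
  e52 : E₅*E₂ = 0
  e53 : E₅*E₃ = 0
  e54 : E₅*E₄ = 0
  e55 : E₅*E₅ = 0

def Inv (p q : K) (m : ℕ) (a β γ d A B C D : R) : Prop :=
  ∃ E₁ E₂ E₃ E₄ E₅ : R, Conds p q m a β γ d A B C D E₁ E₂ E₃ E₄ E₅

theorem base (p q : K) (hp : p ≠ 0) (hq : q ≠ 0) (a β γ d : R)
    (hab : a * β = q • (β * a)) (hdb : d * β = q • (β * d))
    (hag : a * γ = p • (γ * a)) (hdg : d * γ = p • (γ * d))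
    (hbg : β * γ = -((p * q⁻¹) • (γ * β)))
    (hbb : β * β = 0) (hgg : γ * γ = 0)
    (hda : d * a = a * d - (p - q⁻¹) • (γ * β)) :
    Inv p q 1 a β γ d a β γ d := by
  refine ⟨0, -((p - q⁻¹) • (γ * β)), (p - q⁻¹) • (γ * β), 0,
      -((p - q⁻¹) • (γ * β)), ?_⟩
  constructor <;>
  · simp only [mul_assoc,
    mul_add,
    add_mul,
    mul_sub,
    sub_mul,
    mul_smul_comm,
    smul_mul_assoc,
    smul_smul,
    smul_add,
    smul_sub,
    neg_mul,
    mul_neg,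
    neg_smul,
    smul_neg,
    neg_neg,
    zero_mul,
    mul_zero,
    smul_zero,
    zero_smul,
    add_zero,
    zero_add,
    neg_zero,
    sub_zero,
    zero_sub,
    sub_self,
    hab,
    hdb,
    hag,
    hdg,
    hbg,
    hbb,
    hgg,
    hda,
    mar hab,
    mar hdb,
    mar hag,
    mar hdg,
    mar hbg,
    mar hbb,
    mar hgg,
    mar hda,
    pow_one]
    try (match_scalars <;> (try field_simp) <;>
      first
        | ring1
        | (left; first | trivial | ring1)
        | (right; first | trivial | ring1)
        | tauto
        | skip)

theorem step (p q : K) (hp : p ≠ 0) (hq : q ≠ 0) (a β γ d : R)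
    (hab : a * β = q • (β * a)) (hdb : d * β = q • (β * d))
    (hag : a * γ = p • (γ * a)) (hdg : d * γ = p • (γ * d))
    (hbg : β * γ = -((p * q⁻¹) • (γ * β)))
    (hbb : β * β = 0) (hgg : γ * γ = 0)
    (hda : d * a = a * d - (p - q⁻¹) • (γ * β))
    (m : ℕ) (A B C D : R)
    (h : Inv p q m a β γ d A B C D) :
    Inv p q (m+1) a β γ d (A*a + B*γ) (A*β + B*d) (C*a + D*γ) (C*β + D*d) := by
  obtain ⟨E₁, E₂, E₃, E₄, E₅, h⟩ := h
  obtain ⟨hAb, hAg, hDb, hDg, hbB, hBb, hgC, hCg, hBg, hCb, haB, hdB, haC, hdC, haA, hdA, haD, hdD, hDA, hAB, hDB, hAC, hDC, hBB, hCC, hBC, c1bE, c1Eb, c1gE, c1Eg, c1aE, c1dE, c1AE, c1DE, c1BE, c1CE, c1EB, c1EC, c2bE, c2Eb, c2gE, c2Eg, c2aE, c2dE, c2AE, c2DE, c2BE, c2CE, c2EB, c2EC, c3bE, c3Eb, c3gE, c3Eg, c3aE, c3dE, c3AE, c3DE, c3BE, c3CE, c3EB, c3EC, c4bE, c4Eb,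 c4gE, c4Eg, c4aE, c4dE, c4AE, c4DE, c4BE, c4CE, c4EB, c4EC, c5bE, c5Eb, c5gE, c5Eg, c5aE, c5dE, c5AE, c5DE, c5BE, c5CE, c5EB, c5EC, e11, e12, e13, e14, e15, e21, e22, e23, e24, e25, e31, e32, e33, e34, e35, e41, e42, e43, e44, e45, e51, e52, e53, e54, e55⟩ := h
  have hpm : p^m ≠ 0 := pow_ne_zero _ hp
  have hqm : q^m ≠ 0 := pow_ne_zero _ hq
  have hbC : β*C = (-(p * (q^m)⁻¹)) • (C*β) := by
    rw [hCb, smul_smul]; match_scalars; field_simp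
  refine ⟨E₁*a + (p*q-1) • (B*(γ*a)),
      E₂*a - ((p-q⁻¹)*(p*q)^m) • (γ*(β*A)) + (p*q-1) • (B*(γ*d)),
      E₃*d + (p*q-1) • (C*(β*a)) + ((p-q⁻¹)*(p*q)^m) • (γ*(β*D)),
      E₄*d + (p*q-1) • (C*(β*d)),
      (p^m*q^(2*m+1) - q^m*p⁻¹) • (β*(C*(A*a))) + E₅*(a*d) + ((p*q)^m) • (E₂*(D*a)) - ((p*q)^m) • (E₃*(A*d)) - ((p-q⁻¹)*(p*q)^(2*m)) • (γ*(β*(A*D))) + (p^m*q⁻¹ - p^(2*m+1)*q^m) • (γ*(B*(D*d))), ?_⟩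
  refine ⟨?_, ?_, ?_, ?_, ?_, ?_, ?_, ?_, ?_, ?_, ?_, ?_, ?_, ?_, ?_, ?_, ?_, ?_, ?_, ?_, ?_, ?_, ?_, ?_, ?_, ?_, ?_, ?_, ?_, ?_, ?_, ?_, ?_, ?_, ?_, ?_, ?_, ?_, ?_, ?_, ?_, ?_, ?_, ?_, ?_, ?_, ?_, ?_, ?_, ?_, ?_, ?_, ?_, ?_, ?_, ?_, ?_, ?_, ?_, ?_, ?_, ?_, ?_, ?_, ?_, ?_, ?_, ?_, ?_, ?_, ?_, ?_, ?_, ?_, ?_, ?_, ?_, ?_, ?_, ?_, ?_, ?_, ?_, ?_, ?_, ?_, ?_, ?_, ?_, ?_, ?_, ?_, ?_, ?_, ?_, ?_, ?_, ?_, ?_, ?_, ?_, ?_, ?_, ?_, ?_, ?_, ?_, ?_, ?_, ?_, ?_⟩ <;>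
  · simp only [mul_assoc,
    mul_add,
    add_mul,
    mul_sub,
    sub_mul,
    mul_smul_comm,
    smul_mul_assoc,
    smul_smul,
    smul_add,
    smul_sub,
    neg_mul,
    mul_neg,
    neg_smul,
    smul_neg,
    neg_neg,
    zero_mul,
    mul_zero,
    smul_zero,
    zero_smul,
    add_zero,
    zero_add,
    neg_zero,
    sub_zero,
    zero_sub,
    sub_self,
    hab,
    hdb,
    hag,
    hdg,
    hbg,
    hbb,
    hgg,
    hda,
    mar hab,
    mar hdb,
    mar hag,
    mar hdg,
    mar hbg,
    mar hbb,
    mar hgg,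
    mar hda,
    hAb,
    hAg,
    hDb,
    hDg,
    hbB,
    hBb,
    hgC,
    hCg,
    hBg,
    haB,
    hdB,
    haC,
    hdC,
    haA,
    hdA,
    haD,
    hdD,
    hDA,
    hAB,
    hDB,
    hAC,
    hDC,
    hBB,
    hCC,
    hBC,
    c1bE,
    c1Eb,
    c1gE,
    c1Eg,
    c1aE,
    c1dE,
    c1AE,
    c1DE,
    c1BE,
    c1CE,
    c1EB,
    c1EC,
    c2bE,
    c2Eb,
    c2gE,
    c2Eg,
    c2aE,
    c2dE,
    c2AE,
    c2DE,
    c2BE,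
    c2CE,
    c2EB,
    c2EC,
    c3bE,
    c3Eb,
    c3gE,
    c3Eg,
    c3aE,
    c3dE,
    c3AE,
    c3DE,
    c3BE,
    c3CE,
    c3EB,
    c3EC,
    c4bE,
    c4Eb,
    c4gE,
    c4Eg,
    c4aE,
    c4dE,
    c4AE,
    c4DE,
    c4BE,
    c4CE,
    c4EB,
    c4EC,
    c5bE,
    c5Eb,
    c5gE,
    c5Eg,
    c5aE,
    c5dE,
    c5AE,
    c5DE,
    c5BE,
    c5CE,
    c5EB,
    c5EC,
    e11,
    e12,
    e13,
    e14,
    e15,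
    e21,
    e22,
    e23,
    e24,
    e25,
    e31,
    e32,
    e33,
    e34,
    e35,
    e41,
    e42,
    e43,
    e44,
    e45,
    e51,
    e52,
    e53,
    e54,
    e55,
    hbC,
    mar hAb,
    mar hAg,
    mar hDb,
    mar hDg,
    mar hbB,
    mar hBb,
    mar hgC,
    mar hCg,
    mar hBg,
    mar haB,
    mar hdB,
    mar haC,
    mar hdC,
    mar haA,
    mar hdA,
    mar haD,
    mar hdD,
    mar hDA,
    mar hAB,
    mar hDB,
    mar hAC,
    mar hDC,
    mar hBB,
    mar hCC,
    mar hBC,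
    mar c1bE,
    mar c1Eb,
    mar c1gE,
    mar c1Eg,
    mar c1aE,
    mar c1dE,
    mar c1AE,
    mar c1DE,
    mar c1BE,
    mar c1CE,
    mar c1EB,
    mar c1EC,
    mar c2bE,
    mar c2Eb,
    mar c2gE,
    mar c2Eg,
    mar c2aE,
    mar c2dE,
    mar c2AE,
    mar c2DE,
    mar c2BE,
    mar c2CE,
    mar c2EB,
    mar c2EC,
    mar c3bE,
    mar c3Eb,
    mar c3gE,
    mar c3Eg,
    mar c3aE,
    mar c3dE,
    mar c3AE,
    mar c3DE,
    mar c3BE,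
    mar c3CE,
    mar c3EB,
    mar c3EC,
    mar c4bE,
    mar c4Eb,
    mar c4gE,
    mar c4Eg,
    mar c4aE,
    mar c4dE,
    mar c4AE,
    mar c4DE,
    mar c4BE,
    mar c4CE,
    mar c4EB,
    mar c4EC,
    mar c5bE,
    mar c5Eb,
    mar c5gE,
    mar c5Eg,
    mar c5aE,
    mar c5dE,
    mar c5AE,
    mar c5DE,
    mar c5BE,
    mar c5CE,
    mar c5EB,
    mar c5EC,
    mar e11,
    mar e12,
    mar e13,
    mar e14,
    mar e15,
    mar e21,
    mar e22,
    mar e23,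
    mar e24,
    mar e25,
    mar e31,
    mar e32,
    mar e33,
    mar e34,
    mar e35,
    mar e41,
    mar e42,
    mar e43,
    mar e44,
    mar e45,
    mar e51,
    mar e52,
    mar e53,
    mar e54,
    mar e55,
    mar hbC]
    try (match_scalars <;> (try field_simp) <;>
      first
        | ring1
        | (left; first | trivial | ring1)
        | (right; first | trivial | ring1)
        | tauto
        | skip)



theorem inv_pow (p q : K) (hp : p ≠ 0) (hq : q ≠ 0) (a β γ d : R)
    (hab : a * β = q • (β * a)) (hdb : d * β = q • (β * d))
    (hag : a * γ = p • (γ * a)) (hdg : d * γ = p • (γ * d))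
    (hbg : β * γ = -((p * q⁻¹) • (γ * β)))
    (hbb : β * β = 0) (hgg : γ * γ = 0)
    (hda : d * a = a * d - (p - q⁻¹) • (γ * β)) :
    ∀ n : ℕ, 1 ≤ n → Inv p q n a β γ d
      ((!![a,β;γ,d] ^ n) 0 0) ((!![a,β;γ,d] ^ n) 0 1)
      ((!![a,β;γ,d] ^ n) 1 0) ((!![a,β;γ,d] ^ n) 1 1) := by
  intro n hn
  induction n, hn using Nat.le_induction with
  | base =>
      have h := base p q hp hq a β γ d hab hdb hag hdg hbg hbb hgg hda
      simpa using h
  | succ n hn ih =>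
      have h00 : ((!![a,β;γ,d] : Matrix (Fin 2) (Fin 2) R) ^ (n+1)) 0 0
          = (!![a,β;γ,d] ^ n) 0 0 * a + (!![a,β;γ,d] ^ n) 0 1 * γ := by
        rw [pow_succ, Matrix.mul_apply, Fin.sum_univ_two]; simp
      have h01 : ((!![a,β;γ,d] : Matrix (Fin 2) (Fin 2) R) ^ (n+1)) 0 1
          = (!![a,β;γ,d] ^ n) 0 0 * β + (!![a,β;γ,d] ^ n) 0 1 * d := by
        rw [pow_succ, Matrix.mul_apply, Fin.sum_univ_two]; simp
      have h10 : ((!![a,β;γ,d] : Matrix (Fin 2) (Fin 2) R) ^ (n+1)) 1 0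
          = (!![a,β;γ,d] ^ n) 1 0 * a + (!![a,β;γ,d] ^ n) 1 1 * γ := by
        rw [pow_succ, Matrix.mul_apply, Fin.sum_univ_two]; simp
      have h11 : ((!![a,β;γ,d] : Matrix (Fin 2) (Fin 2) R) ^ (n+1)) 1 1
          = (!![a,β;γ,d] ^ n) 1 0 * β + (!![a,β;γ,d] ^ n) 1 1 * d := by
        rw [pow_succ, Matrix.mul_apply, Fin.sum_univ_two]; simp
      rw [h00, h01, h10, h11]
      exact step p q hp hq a β γ d hab hdb hag hdg hbg hbb hgg hda n _ _ _ _ ih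

end GLpqAux

/-- Lemma 3.2, off-diagonal relations for the entries of Tⁿ. -/
theorem gl_pq_lemma_3_2_offdiag
{K : Type*} [Field K] {R : Type*} [Ring R] [Algebra K R]
    (p q : K) (hp : p ≠ 0) (hq : q ≠ 0)
    (a β γ d : R)
    (hab : a * β = q • (β * a)) (hdb : d * β = q • (β * d))
    (hag : a * γ = p • (γ * a)) (hdg : d * γ = p • (γ * d))
    (hbg : β * γ = -((p * q⁻¹) • (γ * β)))
    (hb2 : β ^ 2 = 0) (hg2 : γ ^ 2 = 0)
    (had : a * d - d * a = (p - q⁻¹) • (γ * β))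
    (n : ℕ) (hn : 1 ≤ n) :
    letI T : Matrix (Fin 2) (Fin 2) R := !![a, β; γ, d]
    letI A := (T ^ n) 0 0
    letI B := (T ^ n) 0 1
    letI C := (T ^ n) 1 0
    letI D := (T ^ n) 1 1
    A * B = q ^ n • (B * A) ∧ D * B = q ^ n • (B * D) ∧
    A * C = p ^ n • (C * A) ∧ D * C = p ^ n • (C * D) ∧
    B ^ 2 = 0 ∧ C ^ 2 = 0 ∧
    q ^ n • (B * C) + p ^ n • (C * B) = 0 := by
  have hbb : β * β = 0 := by have := hb2; rwa [pow_two] at this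
  have hgg : γ * γ = 0 := by have := hg2; rwa [pow_two] at this
  have hda : d * a = a * d - (p - q⁻¹) • (γ * β) := by rw [← had]; abel
  obtain ⟨E₁, E₂, E₃, E₄, E₅, h⟩ :=
    GLpqAux.inv_pow p q hp hq a β γ d hab hdb hag hdg hbg hbb hgg hda n hn
  refine ⟨h.hAB, h.hDB, h.hAC, h.hDC, ?_, ?_, ?_⟩
  · rw [pow_two]; exact h.hBB
  · rw [pow_two]; exact h.hCC
  · rw [h.hBC, smul_smul]
    have hc : q ^ n * -(p ^ n * (q ^ n)⁻¹) = -p ^ n := by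
      field_simp
    rw [hc, neg_smul, neg_add_cancel]
end

section
/- Lemma 4.3 (n-th power of M): In the algebra M_{h₁,h₂}, writing φ = 2h₁/(h₁+h₂) and ψ = 2h₂/(h₁+h₂), for all n ≥ 1 the matrix Mⁿ of M = (x, μ; ν, y) has entries (Mⁿ)₁₂ = μ·G_n and (Mⁿ)₂₁ = ν·G_nᵗ, where G_n = Σ_{k=0}^{n-1} (x+φ)^{n-1-k} y^k (the 'q-analog' ((x+φ)ⁿ - yⁿ)/(x - y + φ)) and G_nᵗ = Σ_{k=0}^{n-1} (y+ψ)^{n-1-k} x^k. -/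
/-- Lemma 4.3: the off-diagonal entries of Mⁿ are μ·G_n and ν·G_nᵗ, with
G_n = Σ_{k<n} (x+φ)^(n-1-k) yᵏ and G_nᵗ = Σ_{k<n} (y+ψ)^(n-1-k) xᵏ, where
φ = 2h₁/(h₁+h₂), ψ = 2h₂/(h₁+h₂). -/
theorem gl_pq_lemma_4_3
{K : Type*} [Field K] [CharZero K] {R : Type*} [Ring R] [Algebra K R]
    (h₁ h₂ : K) (hh : h₁ + h₂ ≠ 0)
    (x y μ ν : R)
    (hxm : x * μ - μ * x = (2 * h₁ / (h₁ + h₂)) • μ)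
    (hym : y * μ - μ * y = (2 * h₁ / (h₁ + h₂)) • μ)
    (hxn : x * ν - ν * x = (2 * h₂ / (h₁ + h₂)) • ν)
    (hyn : y * ν - ν * y = (2 * h₂ / (h₁ + h₂)) • ν)
    (hm2 : μ ^ 2 = 0) (hn2 : ν ^ 2 = 0)
    (hxy : x * y = y * x)
    (hmn : μ * ν + ν * μ = 0)
    (n : ℕ) (hn : 1 ≤ n) :
    ((!![x, μ; ν, y] : Matrix (Fin 2) (Fin 2) R) ^ n) 0 1 =
      μ * ∑ k ∈ Finset.range n,
        (x + (2 * h₁ / (h₁ + h₂)) • (1 : R)) ^ (n - 1 - k) * y ^ k ∧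
    ((!![x, μ; ν, y] : Matrix (Fin 2) (Fin 2) R) ^ n) 1 0 =
      ν * ∑ k ∈ Finset.range n,
        (y + (2 * h₂ / (h₁ + h₂)) • (1 : R)) ^ (n - 1 - k) * x ^ k := by
  set a : R := x + (2 * h₁ / (h₁ + h₂)) • (1 : R) with ha
  set b : R := y + (2 * h₂ / (h₁ + h₂)) • (1 : R) with hb
  set c₁ : R := x + ((2 * h₁ / (h₁ + h₂)) + (2 * h₂ / (h₁ + h₂))) • (1 : R) with hc₁
  set c₂ : R := y + ((2 * h₁ / (h₁ + h₂)) + (2 * h₂ / (h₁ + h₂))) • (1 : R) with hc₂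
  set M : Matrix (Fin 2) (Fin 2) R := !![x, μ; ν, y] with hM
  -- basic commutation identities
  have hxmu : x * μ = μ * a := by
    rw [ha, mul_add, mul_smul_comm, mul_one, sub_eq_iff_eq_add.mp hxm, add_comm]
  have hynu : y * ν = ν * b := by
    rw [hb, mul_add, mul_smul_comm, mul_one, sub_eq_iff_eq_add.mp hyn, add_comm]
  have hanu : a * ν = ν * c₁ := by
    rw [ha, hc₁, add_mul, smul_mul_assoc, one_mul, sub_eq_iff_eq_add.mp hxn,
      mul_add, mul_smul_comm, mul_one, add_smul]
    abel
  have hbmu : b * μ = μ * c₂ := by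
    rw [hb, hc₂, add_mul, smul_mul_assoc, one_mul, sub_eq_iff_eq_add.mp hym,
      mul_add, mul_smul_comm, mul_one, add_smul]
    abel
  have hmm : μ * μ = 0 := by rw [← sq]; exact hm2
  have hnn : ν * ν = 0 := by rw [← sq]; exact hn2
  have hz1 : ∀ r : R, μ * (ν * (μ * r)) = 0 := by
    intro r
    have h1 : μ * ν = -(ν * μ) := eq_neg_of_add_eq_zero_left hmn
    rw [← mul_assoc, ← mul_assoc, h1, neg_mul, mul_assoc ν μ μ, hmm, mul_zero,
      neg_zero, zero_mul]
  have hz2 : ∀ r : R, ν * (μ * (ν * r)) = 0 := by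
    intro r
    have h1 : ν * μ = -(μ * ν) := eq_neg_of_add_eq_zero_right hmn
    rw [← mul_assoc, ← mul_assoc, h1, neg_mul, mul_assoc μ ν ν, hnn, mul_zero,
      neg_zero, zero_mul]
  -- recursion for the q-analog sums
  have hrec : ∀ (u v : R) (m : ℕ),
      (∑ k ∈ Finset.range (m + 2), u ^ (m + 1 - k) * v ^ k)
        = u * (∑ k ∈ Finset.range (m + 1), u ^ (m - k) * v ^ k) + v ^ (m + 1) := by
    intro u v m
    rw [Finset.sum_range_succ, Finset.mul_sum, Nat.sub_self, pow_zero, one_mul]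
    congr 1
    refine Finset.sum_congr rfl fun k hk => ?_
    have hk' : k < m + 1 := Finset.mem_range.mp hk
    rw [← mul_assoc, ← pow_succ']
    congr 2
    omega
  -- the strengthened induction
  have key : ∀ m : ℕ, ∃ p q : R,
      (M ^ (m + 1)) 0 0 = x ^ (m + 1) + μ * (ν * q) ∧
      (M ^ (m + 1)) 0 1 = μ * ∑ k ∈ Finset.range (m + 1), a ^ (m - k) * y ^ k ∧
      (M ^ (m + 1)) 1 0 = ν * ∑ k ∈ Finset.range (m + 1), b ^ (m - k) * x ^ k ∧
      (M ^ (m + 1)) 1 1 = y ^ (m + 1) + ν * (μ * p) := by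
    intro m
    induction m with
    | zero =>
      refine ⟨0, 0, ?_, ?_, ?_, ?_⟩ <;>
        simp [hM, Matrix.cons_val_zero, Matrix.cons_val_one]
    | succ m ih =>
      obtain ⟨p, q, h00, h01, h10, h11⟩ := ih
      have e00 : (M ^ (m + 2)) 0 0 = x * (M ^ (m + 1)) 0 0 + μ * (M ^ (m + 1)) 1 0 := by
        rw [pow_succ']; simp [hM, Matrix.mul_apply, Fin.sum_univ_two]
      have e01 : (M ^ (m + 2)) 0 1 = x * (M ^ (m + 1)) 0 1 + μ * (M ^ (m + 1)) 1 1 := by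
        rw [pow_succ']; simp [hM, Matrix.mul_apply, Fin.sum_univ_two]
      have e10 : (M ^ (m + 2)) 1 0 = ν * (M ^ (m + 1)) 0 0 + y * (M ^ (m + 1)) 1 0 := by
        rw [pow_succ']; simp [hM, Matrix.mul_apply, Fin.sum_univ_two]
      have e11 : (M ^ (m + 2)) 1 1 = ν * (M ^ (m + 1)) 0 1 + y * (M ^ (m + 1)) 1 1 := by
        rw [pow_succ']; simp [hM, Matrix.mul_apply, Fin.sum_univ_two]
      refine ⟨(∑ k ∈ Finset.range (m + 1), a ^ (m - k) * y ^ k) + c₂ * p,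
              c₁ * q + (∑ k ∈ Finset.range (m + 1), b ^ (m - k) * x ^ k),
              ?_, ?_, ?_, ?_⟩
      · rw [e00, h00, h10, mul_add, ← pow_succ', mul_add, ← mul_assoc x μ, hxmu,
          mul_assoc μ a, ← mul_assoc a ν, hanu]
        noncomm_ring
      · rw [e01, h01, h11, hrec a y m, mul_add μ, ← mul_assoc x μ, hxmu,
          mul_assoc μ a, mul_add μ, hz1 p, add_zero, ← mul_add μ, pow_succ' y]
      · rw [e10, h10, h00, hrec b x m, mul_add ν, hz2 q, add_zero, ← mul_assoc y ν, hynu,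
          pow_succ' x]
        noncomm_ring
      · rw [e11, h01, h11, mul_add, ← pow_succ', mul_add, ← mul_assoc y ν,
          hynu, mul_assoc ν b, ← mul_assoc b μ, hbmu]
        noncomm_ring
  obtain ⟨m, rfl⟩ : ∃ m, n = m + 1 := ⟨n - 1, by omega⟩
  obtain ⟨p, q, _, h01, h10, _⟩ := key m
  refine ⟨?_, ?_⟩
  · rw [h01]; congr 1
  · rw [h10]; congr 1
end
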